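/- (i) For all x ∈ ℝ^p and h ∈ ℝ^q, aᵀT(x,h) = bᵀt(x,h), where a is the N×r matrix with row-blocks (Δ⁻¹A; L_qτ − βᵀΔ⁻¹A; 0_{m_p×r}; 0_{pq×r}; J_qτ), b is the (p+q+k_q)×r matrix with row-blocks (Δ⁻¹A; L_qτ − βᵀΔ⁻¹A; J_qτ), and t(x,h) := (x; h; J_q vech(hhᵀ)). (ii) Consequently, for the exponential family density f(x,h | y) := (2π)^{−p/2} exp(T(x,h)ᵀη_y − ψ_y): if (x₁,h₁), (x₂,h₂) ∈ ℝ^p × {0,1}^q satisfy bᵀt(x₁,h₁) = bᵀt(x₂,h₂), then f(x₁,h₁ | y) · f(x₂,h₂ | y') = f(x₂,h₂ | y) · f(x₁,h₁ | y') for all y, y' ∈ 𝒴; i.e., bᵀ(t(X,H)) is a sufficient reduction in the likelihood-ratio sense. -/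
import Mathlib


open Matrix Real BigOperators

namespace Stmt3

/-- Index set for the distinct entries of a symmetric `q × q` matrix
(on-or-below-diagonal positions); it has cardinality `q(q+1)/2`. -/
abbrev SymIdx (q : ℕ) := {ij : Fin q × Fin q // ij.2 ≤ ij.1}

/-- Index set for the strictly-below-diagonal positions; cardinality `q(q-1)/2`. -/
abbrev StrictIdx (q : ℕ) := {ij : Fin q × Fin q // ij.2 < ij.1}

/-- Half-vectorization of a square matrix: the on-or-below-diagonal entries. -/
def vech {q : ℕ} (G : Matrix (Fin q) (Fin q) ℝ) : SymIdx q → ℝ :=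
  fun ij => G ij.1.1 ij.1.2

/-- Vectorization of a matrix (indexed by pairs). -/
def vecM {a b : ℕ} (M : Matrix (Fin a) (Fin b) ℝ) : Fin a × Fin b → ℝ :=
  fun ij => M ij.1 ij.2

/-- The duplication matrix `D_q`: `vec G = D_q *ᵥ vech G` for symmetric `G`. -/
def Dmat (q : ℕ) : Matrix (Fin q × Fin q) (SymIdx q) ℝ :=
  fun ij kl => if ij = kl.1 then 1 else if (ij.2, ij.1) = kl.1 then 1 else 0

/-- The matrix `L_q`: `L_q *ᵥ vech G` is the diagonal of `G`. -/
def Lmat (q : ℕ) : Matrix (Fin q) (SymIdx q) ℝ :=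
  fun j kl => if kl.1 = (j, j) then 1 else 0

/-- The matrix `J_q`: `J_q *ᵥ vech G` lists the strictly-below-diagonal entries of `G`. -/
def Jmat (q : ℕ) : Matrix (StrictIdx q) (SymIdx q) ℝ :=
  fun ij kl => if ij.1 = kl.1 then 1 else 0

/-- Index set for the sufficient statistic `T(x,h) ∈ ℝ^N`,
`N = p + q + m_p + pq + k_q`. -/
abbrev TIdx (p q : ℕ) :=
  Fin p ⊕ Fin q ⊕ SymIdx p ⊕ (Fin p × Fin q) ⊕ StrictIdx q

/-- The sufficient statistic
`T(x,h) = (x; h; -½ D_pᵀ D_p vech(xxᵀ); vec(xhᵀ); J_q vech(hhᵀ))`. -/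
noncomputable def Tstat {p q : ℕ} (x : Fin p → ℝ) (h : Fin q → ℝ) : TIdx p q → ℝ :=
  Sum.elim x <| Sum.elim h <| Sum.elim
    (fun s => (-(1 : ℝ)/2) * (((Dmat p)ᵀ *ᵥ ((Dmat p) *ᵥ vech (vecMulVec x x))) s)) <|
    Sum.elim (fun ij => x ij.1 * h ij.2)
      (Jmat q *ᵥ vech (vecMulVec h h))

variable {p q r : ℕ}

/-- First block of the natural parameter: `η_{y1} = Δ⁻¹μ_X − Δ⁻¹β μ_H + Δ⁻¹A f_y`. -/
noncomputable def eta1 (μX : Fin p → ℝ) (μH : Fin q → ℝ) (A : Matrix (Fin p) (Fin r) ℝ)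
    (β : Matrix (Fin p) (Fin q) ℝ) (Δ : Matrix (Fin p) (Fin p) ℝ) (fy : Fin r → ℝ) :
    Fin p → ℝ :=
  Δ⁻¹ *ᵥ μX - Δ⁻¹ *ᵥ (β *ᵥ μH) + Δ⁻¹ *ᵥ (A *ᵥ fy)

/-- The natural parameter `η_y = (η_{y1}; η_{y2}; η_{y3}; η_{y4}; η_{y5})`. -/
noncomputable def eta (μX : Fin p → ℝ) (μH : Fin q → ℝ) (A : Matrix (Fin p) (Fin r) ℝ)
    (β : Matrix (Fin p) (Fin q) ℝ) (Δ : Matrix (Fin p) (Fin p) ℝ)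
    (τ0 : SymIdx q → ℝ) (τ : Matrix (SymIdx q) (Fin r) ℝ) (fy : Fin r → ℝ) :
    TIdx p q → ℝ :=
  Sum.elim (eta1 μX μH A β Δ fy) <|
  Sum.elim (-(βᵀ *ᵥ (Δ⁻¹ *ᵥ μX)) + βᵀ *ᵥ (Δ⁻¹ *ᵥ (β *ᵥ μH)) + Lmat q *ᵥ τ0
      - (1/2 : ℝ) • (Lmat q *ᵥ ((Dmat q)ᵀ *ᵥ vecM (βᵀ * Δ⁻¹ * β)))
      + (Lmat q *ᵥ (τ *ᵥ fy) - βᵀ *ᵥ (Δ⁻¹ *ᵥ (A *ᵥ fy)))) <|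
  Sum.elim (vech Δ⁻¹) <|
  Sum.elim (vecM (Δ⁻¹ * β))
    (-((1/2 : ℝ) • (Jmat q *ᵥ ((Dmat q)ᵀ *ᵥ vecM (βᵀ * Δ⁻¹ * β))))
      + Jmat q *ᵥ τ0 + Jmat q *ᵥ (τ *ᵥ fy))

/-- The `{0,1}`-vector associated with a Boolean vector. -/
def bvec {q : ℕ} (s : Fin q → Bool) : Fin q → ℝ := fun i => if s i then 1 else 0

/-- The Ising normalizing constant `G_y = Σ_{h ∈ {0,1}^q} exp(vech(hhᵀ)ᵀ(τ₀ + τ f_y))`. -/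
noncomputable def Gfun (τ0 : SymIdx q → ℝ) (τ : Matrix (SymIdx q) (Fin r) ℝ)
    (fy : Fin r → ℝ) : ℝ :=
  ∑ s : Fin q → Bool, Real.exp (vech (vecMulVec (bvec s) (bvec s)) ⬝ᵥ (τ0 + τ *ᵥ fy))

/-- The log-partition `ψ_y = ½ η_{y1}ᵀ Δ η_{y1} + log G_y + ½ log det Δ`. -/
noncomputable def psi (μX : Fin p → ℝ) (μH : Fin q → ℝ) (A : Matrix (Fin p) (Fin r) ℝ)
    (β : Matrix (Fin p) (Fin q) ℝ) (Δ : Matrix (Fin p) (Fin p) ℝ)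
    (τ0 : SymIdx q → ℝ) (τ : Matrix (SymIdx q) (Fin r) ℝ) (fy : Fin r → ℝ) : ℝ :=
  (1/2 : ℝ) * (eta1 μX μH A β Δ fy ⬝ᵥ (Δ *ᵥ eta1 μX μH A β Δ fy))
    + Real.log (Gfun τ0 τ fy) + (1/2 : ℝ) * Real.log Δ.det


/-- The matrix `a` with row-blocks `(Δ⁻¹A; L_qτ − βᵀΔ⁻¹A; 0; 0; J_qτ)`. -/
noncomputable def aMat (A : Matrix (Fin p) (Fin r) ℝ) (β : Matrix (Fin p) (Fin q) ℝ)
    (Δ : Matrix (Fin p) (Fin p) ℝ) (τ : Matrix (SymIdx q) (Fin r) ℝ) :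
    Matrix (TIdx p q) (Fin r) ℝ :=
  Matrix.of <| Sum.elim (fun i k => (Δ⁻¹ * A) i k) <|
    Sum.elim (fun i k => (Lmat q * τ - βᵀ * Δ⁻¹ * A) i k) <|
    Sum.elim (fun _ _ => (0 : ℝ)) <|
    Sum.elim (fun _ _ => (0 : ℝ)) (fun i k => (Jmat q * τ) i k)

/-- Index set for `t(x,h) = (x; h; J_q vech(hhᵀ)) ∈ ℝ^{p+q+k_q}`. -/
abbrev tIdx (p q : ℕ) := Fin p ⊕ Fin q ⊕ StrictIdx q

/-- The reduced statistic `t(x,h) = (x; h; J_q vech(hhᵀ))`. -/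
noncomputable def tstat {p q : ℕ} (x : Fin p → ℝ) (h : Fin q → ℝ) : tIdx p q → ℝ :=
  Sum.elim x <| Sum.elim h (Jmat q *ᵥ vech (vecMulVec h h))

/-- The matrix `b` with row-blocks `(Δ⁻¹A; L_qτ − βᵀΔ⁻¹A; J_qτ)`. -/
noncomputable def bMat (A : Matrix (Fin p) (Fin r) ℝ) (β : Matrix (Fin p) (Fin q) ℝ)
    (Δ : Matrix (Fin p) (Fin p) ℝ) (τ : Matrix (SymIdx q) (Fin r) ℝ) :
    Matrix (tIdx p q) (Fin r) ℝ :=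
  Matrix.of <| Sum.elim (fun i k => (Δ⁻¹ * A) i k) <|
    Sum.elim (fun i k => (Lmat q * τ - βᵀ * Δ⁻¹ * A) i k) (fun i k => (Jmat q * τ) i k)

/-- The exponential family density `f(x,h|y) = (2π)^{-p/2} exp(T(x,h)ᵀη_y − ψ_y)`. -/
noncomputable def fdens (μX : Fin p → ℝ) (μH : Fin q → ℝ) (A : Matrix (Fin p) (Fin r) ℝ)
    (β : Matrix (Fin p) (Fin q) ℝ) (Δ : Matrix (Fin p) (Fin p) ℝ)
    (τ0 : SymIdx q → ℝ) (τ : Matrix (SymIdx q) (Fin r) ℝ) (fy : Fin r → ℝ)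
    (x : Fin p → ℝ) (h : Fin q → ℝ) : ℝ :=
  (2 * Real.pi) ^ (-(p : ℝ) / 2) *
    Real.exp (Tstat x h ⬝ᵥ eta μX μH A β Δ τ0 τ fy - psi μX μH A β Δ τ0 τ fy)

lemma parti (A : Matrix (Fin p) (Fin r) ℝ) (β : Matrix (Fin p) (Fin q) ℝ)
    (Δ : Matrix (Fin p) (Fin p) ℝ) (τ : Matrix (SymIdx q) (Fin r) ℝ)
    (x : Fin p → ℝ) (h : Fin q → ℝ) :
    (aMat A β Δ τ)ᵀ *ᵥ Tstat x h = (bMat A β Δ τ)ᵀ *ᵥ tstat x h := by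
  funext k
  simp [Matrix.mulVec, dotProduct, Fintype.sum_sum_type, aMat, bMat, Tstat, tstat]

lemma eta_affine (μX : Fin p → ℝ) (μH : Fin q → ℝ) (A : Matrix (Fin p) (Fin r) ℝ)
    (β : Matrix (Fin p) (Fin q) ℝ) (Δ : Matrix (Fin p) (Fin p) ℝ)
    (τ0 : SymIdx q → ℝ) (τ : Matrix (SymIdx q) (Fin r) ℝ) (fy : Fin r → ℝ) :
    eta μX μH A β Δ τ0 τ fy
      = eta μX μH A β Δ τ0 τ 0 + aMat A β Δ τ *ᵥ fy := by
  have ha1 : ∀ i, (aMat A β Δ τ *ᵥ fy) (Sum.inl i) = ((Δ⁻¹ * A) *ᵥ fy) i := fun _ => rfl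
  have ha2 : ∀ i, (aMat A β Δ τ *ᵥ fy) (Sum.inr (Sum.inl i))
      = ((Lmat q * τ - βᵀ * Δ⁻¹ * A) *ᵥ fy) i := fun _ => rfl
  have ha5 : ∀ i, (aMat A β Δ τ *ᵥ fy) (Sum.inr (Sum.inr (Sum.inr (Sum.inr i))))
      = ((Jmat q * τ) *ᵥ fy) i := fun _ => rfl
  funext j
  rcases j with i | i | i | i | i
  · simp only [eta, Sum.elim_inl, Pi.add_apply, ha1]
    simp [eta1, Matrix.mulVec_mulVec, Matrix.mulVec_zero]
  · simp only [eta, Sum.elim_inl, Sum.elim_inr, Pi.add_apply, ha2]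
    simp [Matrix.mulVec_mulVec, Matrix.mulVec_zero, Matrix.sub_mulVec, Matrix.mul_assoc]
  · simp only [eta, Sum.elim_inl, Sum.elim_inr, Pi.add_apply]
    simp [aMat, Matrix.mulVec, dotProduct]
  · simp only [eta, Sum.elim_inl, Sum.elim_inr, Pi.add_apply]
    simp [aMat, Matrix.mulVec, dotProduct]
  · simp only [eta, Sum.elim_inl, Sum.elim_inr, Pi.add_apply, ha5]
    simp [Matrix.mulVec_mulVec, Matrix.mulVec_zero]

lemma Tdot (μX : Fin p → ℝ) (μH : Fin q → ℝ) (A : Matrix (Fin p) (Fin r) ℝ)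
    (β : Matrix (Fin p) (Fin q) ℝ) (Δ : Matrix (Fin p) (Fin p) ℝ)
    (τ0 : SymIdx q → ℝ) (τ : Matrix (SymIdx q) (Fin r) ℝ) (fy : Fin r → ℝ)
    (x : Fin p → ℝ) (h : Fin q → ℝ) :
    Tstat x h ⬝ᵥ eta μX μH A β Δ τ0 τ fy
      = Tstat x h ⬝ᵥ eta μX μH A β Δ τ0 τ 0
        + ((bMat A β Δ τ)ᵀ *ᵥ tstat x h) ⬝ᵥ fy := by
  rw [eta_affine μX μH A β Δ τ0 τ fy, dotProduct_add,
    Matrix.dotProduct_mulVec, ← Matrix.mulVec_transpose, parti]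

/-- (i) `aᵀ T(x,h) = bᵀ t(x,h)` for all `x, h`; (ii) consequently, for the
exponential family density, equality of the reductions `bᵀ t` at two points implies the
likelihood-ratio factorization, i.e. `bᵀ t(X,H)` is a sufficient reduction. -/
theorem statement3 {𝒴 : Type*}
    (μX : Fin p → ℝ) (μH : Fin q → ℝ) (A : Matrix (Fin p) (Fin r) ℝ)
    (β : Matrix (Fin p) (Fin q) ℝ) (Δ : Matrix (Fin p) (Fin p) ℝ) (hΔ : Δ.PosDef)
    (τ0 : SymIdx q → ℝ) (τ : Matrix (SymIdx q) (Fin r) ℝ)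
    (f : 𝒴 → Fin r → ℝ) :
    (∀ (x : Fin p → ℝ) (h : Fin q → ℝ),
      (aMat A β Δ τ)ᵀ *ᵥ Tstat x h = (bMat A β Δ τ)ᵀ *ᵥ tstat x h)
    ∧ (∀ (x₁ x₂ : Fin p → ℝ) (h₁ h₂ : Fin q → ℝ),
        (∀ i, h₁ i = 0 ∨ h₁ i = 1) → (∀ i, h₂ i = 0 ∨ h₂ i = 1) →
        (bMat A β Δ τ)ᵀ *ᵥ tstat x₁ h₁ = (bMat A β Δ τ)ᵀ *ᵥ tstat x₂ h₂ →
        ∀ y y' : 𝒴,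
          fdens μX μH A β Δ τ0 τ (f y) x₁ h₁ * fdens μX μH A β Δ τ0 τ (f y') x₂ h₂
            = fdens μX μH A β Δ τ0 τ (f y) x₂ h₂ *
                fdens μX μH A β Δ τ0 τ (f y') x₁ h₁) := by
  refine ⟨parti A β Δ τ, ?_⟩
  intro x₁ x₂ h₁ h₂ _ _ heq y y'
  have comb : ∀ c s1 s2 : ℝ,
      (c * Real.exp s1) * (c * Real.exp s2) = c * c * Real.exp (s1 + s2) := by
    intro c s1 s2; rw [Real.exp_add]; ring
  have hexp : (Tstat x₁ h₁ ⬝ᵥ eta μX μH A β Δ τ0 τ (f y) - psi μX μH A β Δ τ0 τ (f y))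
      + (Tstat x₂ h₂ ⬝ᵥ eta μX μH A β Δ τ0 τ (f y') - psi μX μH A β Δ τ0 τ (f y'))
    = (Tstat x₂ h₂ ⬝ᵥ eta μX μH A β Δ τ0 τ (f y) - psi μX μH A β Δ τ0 τ (f y))
      + (Tstat x₁ h₁ ⬝ᵥ eta μX μH A β Δ τ0 τ (f y') - psi μX μH A β Δ τ0 τ (f y')) := by
    rw [Tdot μX μH A β Δ τ0 τ (f y) x₁ h₁, Tdot μX μH A β Δ τ0 τ (f y') x₂ h₂,
      Tdot μX μH A β Δ τ0 τ (f y) x₂ h₂, Tdot μX μH A β Δ τ0 τ (f y') x₁ h₁, heq]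
    ring
  simp only [fdens]
  rw [comb, comb, hexp]

end Stmt3
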